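/- Let f, g ∈ ℂ[X] with g(X) = Πₖ (X + cₖ) a product of monic linear factors, cₖ ∈ ℂ. If for every polynomial p ∈ ℂ[X] the sum of residues Σ_{b∈ℂ} Res_{X=b} (p(X)·f(X)/g(X)) is zero, then g divides f in ℂ[X]. -/

import Mathlib

/-!
If `g ∤ f`, then since `g` splits some root `b` of `g` has multiplicity `m` in `g` larger
than its multiplicity `j` in `f`. Write `f = (X - b)ʲ u` and `g = (X - b)ᵐ t` with `u(b) ≠ 0`;
for `p = (X - b)ᵐ⁻ʲ⁻¹ t` we get `p f / g = u / (X - b)`, whose only pole is a simple one at `b`,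
with residue `u(b) ≠ 0`.
-/

open Polynomial

/-- The residue of a rational function `h` at the point `b`: the coefficient of
`(X - b)⁻¹` in the Laurent expansion of `h` about `b`. -/
noncomputable def residue (h : RatFunc ℂ) (b : ℂ) : ℂ :=
  ((RatFunc.laurent b h : LaurentSeries ℂ)).coeff (-1)

/-- The total residue `Res⁺`: the sum of the residues of `h` over all points of `ℂ`. -/
noncomputable def totalResidue (h : RatFunc ℂ) : ℂ := ∑ᶠ b : ℂ, residue h b

section LaurentSeries

variable {K : Type*} [Field K]

lemma coe_algebraMap_polynomial (p : K[X]) :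
    ((algebraMap K[X] (RatFunc K) p : RatFunc K) : LaurentSeries K) =
      ((p : PowerSeries K) : LaurentSeries K) :=
  (RatFunc.coe_coe p).symm

lemma coe_algebraMap_div_eq_coe_powerSeries (p q : K[X]) (hq : q.coeff 0 ≠ 0) :
    ((algebraMap K[X] (RatFunc K) p / algebraMap K[X] (RatFunc K) q : RatFunc K) :
      LaurentSeries K) =
      (((p : PowerSeries K) * (q : PowerSeries K)⁻¹ : PowerSeries K) : LaurentSeries K) := by
  have hq' : PowerSeries.constantCoeff (q : PowerSeries K) ≠ 0 := by simpa using hq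
  have hq0 : ((q : PowerSeries K) : LaurentSeries K) ≠ 0 := by
    refine fun h0 => hq' ?_
    rw [(HahnSeries.ofPowerSeries_injective (Γ := ℤ)) (h0.trans (map_zero _).symm), map_zero]
  rw [map_div₀, coe_algebraMap_polynomial, coe_algebraMap_polynomial, div_eq_iff hq0, ← map_mul,
    mul_assoc, PowerSeries.inv_mul_cancel _ hq', mul_one]

lemma coeff_neg_one_coe_algebraMap_div_X (p : K[X]) :
    ((algebraMap K[X] (RatFunc K) p / algebraMap K[X] (RatFunc K) X : RatFunc K) :
      LaurentSeries K).coeff (-1) = p.coeff 0 := by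
  have hX : (HahnSeries.single 1 1 : LaurentSeries K) ≠ 0 := HahnSeries.single_ne_zero one_ne_zero
  rw [map_div₀, coe_algebraMap_polynomial, coe_algebraMap_polynomial, Polynomial.coe_X,
    PowerSeries.coe_X]
  calc _ = (((p : PowerSeries K) : LaurentSeries K) / HahnSeries.single 1 1 *
        HahnSeries.single 1 1).coeff (-1 + 1) := by rw [HahnSeries.coeff_mul_single_add, mul_one]
    _ = p.coeff 0 := by
        rw [div_mul_cancel₀ _ hX, neg_add_cancel, ← Nat.cast_zero,
          LaurentSeries.coeff_coe_powerSeries, Polynomial.coeff_coe]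

end LaurentSeries

lemma residue_div_eq_zero_of_eval_ne_zero (p q : ℂ[X]) {b : ℂ} (hq : q.eval b ≠ 0) :
    residue (algebraMap ℂ[X] (RatFunc ℂ) p / algebraMap ℂ[X] (RatFunc ℂ) q) b = 0 := by
  rw [residue, map_div₀, RatFunc.laurent_algebraMap, RatFunc.laurent_algebraMap,
    coe_algebraMap_div_eq_coe_powerSeries _ _ (by rwa [taylor_coeff_zero]),
    PowerSeries.coeff_coe, if_pos (by norm_num)]

lemma residue_div_X_sub_C_self (u : ℂ[X]) (b : ℂ) :
    residue (algebraMap ℂ[X] (RatFunc ℂ) u / algebraMap ℂ[X] (RatFunc ℂ) (X - C b)) b =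
      u.eval b := by
  rw [residue, map_div₀, RatFunc.laurent_algebraMap, RatFunc.laurent_algebraMap,
    map_sub, taylor_X, taylor_C, add_sub_cancel_right, coeff_neg_one_coe_algebraMap_div_X,
    taylor_coeff_zero]

lemma totalResidue_div_X_sub_C (u : ℂ[X]) (b : ℂ) :
    totalResidue (algebraMap ℂ[X] (RatFunc ℂ) u / algebraMap ℂ[X] (RatFunc ℂ) (X - C b)) =
      u.eval b := by
  rw [totalResidue, finsum_eq_single _ b fun b' hb' => residue_div_eq_zero_of_eval_ne_zero _ _
    (by simpa [sub_eq_zero] using hb'), residue_div_X_sub_C_self]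

lemma exists_rootMultiplicity_lt_of_not_dvd {K : Type*} [Field K] {f g : K[X]}
    (hsplit : g.Splits) (hg : g ≠ 0) (hdvd : ¬ g ∣ f) :
    ∃ b : K, rootMultiplicity b f < rootMultiplicity b g := by
  classical
  by_contra! hle
  refine hdvd (hsplit.dvd_of_roots_le_roots hg (Multiset.le_iff_count.mpr fun b => ?_))
  simpa only [count_roots] using hle b

lemma exists_totalResidue_mul_div_ne_zero {f g : ℂ[X]} (hf : f ≠ 0) {b : ℂ}
    (hlt : rootMultiplicity b f < rootMultiplicity b g) :
    ∃ p : ℂ[X], totalResidue (algebraMap ℂ[X] (RatFunc ℂ) (p * f) /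
      algebraMap ℂ[X] (RatFunc ℂ) g) ≠ 0 := by
  have hg : g ≠ 0 := by rintro rfl; simp at hlt
  obtain ⟨u, hfu, hu⟩ : ∃ u, (X - C b) ^ rootMultiplicity b f * u = f ∧ u.eval b ≠ 0 :=
    ⟨_, pow_mul_divByMonic_rootMultiplicity_eq f b,
      eval_divByMonic_pow_rootMultiplicity_ne_zero b hf⟩
  obtain ⟨t, hgt⟩ : ∃ t, (X - C b) ^ rootMultiplicity b g * t = g :=
    ⟨_, pow_mul_divByMonic_rootMultiplicity_eq g b⟩
  obtain ⟨k, hk⟩ := Nat.exists_eq_add_of_lt hlt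
  generalize rootMultiplicity b f = j at hfu hk
  rw [hk] at hgt
  refine ⟨(X - C b) ^ k * t, ?_⟩
  have hcross : (X - C b) ^ k * t * f * (X - C b) = u * g := by
    rw [← hfu, ← hgt]
    ring
  have hquot : algebraMap ℂ[X] (RatFunc ℂ) ((X - C b) ^ k * t * f) /
      algebraMap ℂ[X] (RatFunc ℂ) g =
        algebraMap ℂ[X] (RatFunc ℂ) u / algebraMap ℂ[X] (RatFunc ℂ) (X - C b) := by
    rw [div_eq_div_iff (RatFunc.algebraMap_ne_zero hg)
      (RatFunc.algebraMap_ne_zero (X_sub_C_ne_zero b)), ← map_mul, ← map_mul, hcross]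
  rwa [hquot, totalResidue_div_X_sub_C]

theorem stmt3 (n : ℕ) (c : Fin n → ℂ) (f : Polynomial ℂ)
    (g : Polynomial ℂ) (hg : g = ∏ k, (Polynomial.X + Polynomial.C (c k)))
    (h : ∀ p : Polynomial ℂ,
      totalResidue (algebraMap (Polynomial ℂ) (RatFunc ℂ) (p * f) /
        algebraMap (Polynomial ℂ) (RatFunc ℂ) g) = 0) :
    g ∣ f := by
  by_contra hdvd
  have hg0 : g ≠ 0 := hg ▸ (monic_prod_of_monic _ _ fun k _ => monic_X_add_C (c k)).ne_zero
  have hf0 : f ≠ 0 := by rintro rfl; exact hdvd (dvd_zero g)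
  obtain ⟨b, hlt⟩ := exists_rootMultiplicity_lt_of_not_dvd (IsAlgClosed.splits g) hg0 hdvd
  obtain ⟨p, hp⟩ := exists_totalResidue_mul_div_ne_zero hf0 hlt
  exact hp (h p)
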